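/- arXiv:1403.1502 — 2 statements merged into one kernel-verified Lean document; each statement's English description precedes it below -/
import Mathlib

section
/- 𝓛_hyp ⊆ E_V: for all positive roots α, β ∈ Φ⁺ with 𝓑(α,β) < −1 and every nonzero z ∈ V with 𝓑(z,α) = 𝓑(z,β) = 0, the direction z̄ is a limit direction of (W,S)_B. -/
open Projectivization Filter Topology TensorProduct
open scoped LinearAlgebra.Projectivization

noncomputable section

/-- The representation space `V`: functions `S → ℝ`, with the simple roots as standard basis. -/
abbrev Vec (S : Type) : Type := S → ℝ

/-- The simple root associated to a generator `s ∈ S`. -/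
def simpleRoot {S : Type} [DecidableEq S] (s : S) : Vec S := Pi.single s 1

/-- The symmetric bilinear form on `V` determined by the matrix `k`. -/
def Bform {S : Type} [Fintype S] (k : S → S → ℝ) (x y : Vec S) : ℝ :=
  ∑ s : S, ∑ t : S, x s * k s t * y t

instance {S : Type} : TopologicalSpace (ℙ ℝ (Vec S)) :=
  inferInstanceAs (TopologicalSpace (Quotient (projectivizationSetoid ℝ (Vec S))))

/-- `p` is an accumulation point of `Y`: every neighbourhood of `p` contains a point of `Y`
different from `p`. -/
def IsAccumPt {X : Type*} [TopologicalSpace X] (p : X) (Y : Set X) : Prop :=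
  ∀ U ∈ nhds p, ∃ y ∈ Y, y ∈ U ∧ y ≠ p

/-- A Lorentzian Coxeter system `(W,S)_B`: a Coxeter system `(W,S)` together with a symmetric
matrix `k` (with entries `-cos (π / m s t)` for `m s t` finite and arbitrary entries `≤ -1`
for `m s t = ∞`, encoded by `M s t = 0`), whose bilinear form has signature `(n-1, 1)`,
and the faithful geometric representation `ρ` of `W` on `V`, sending each simple reflection
to the `𝓑`-reflection in the corresponding simple root, and preserving `𝓑`. -/
structure LorentzianCoxeterSystem (S W : Type) [Fintype S] [DecidableEq S] [Group W] where
  M : CoxeterMatrix S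
  cs : CoxeterSystem M W
  k : S → S → ℝ
  k_symm : ∀ s t, k s t = k t s
  k_fin : ∀ s t, M s t ≠ 0 → k s t = - Real.cos (Real.pi / (M s t : ℝ))
  k_inf : ∀ s t, M s t = 0 → k s t ≤ -1
  ρ : W →* (Vec S ≃ₗ[ℝ] Vec S)
  ρ_inj : Function.Injective ρ
  ρ_simple : ∀ (s : S) (x : Vec S),
    ρ (cs.simple s) x =
      x - (2 * Bform k x (simpleRoot s) / Bform k (simpleRoot s) (simpleRoot s)) • simpleRoot s
  ρ_preserves : ∀ (w : W) (x y : Vec S), Bform k (ρ w x) (ρ w y) = Bform k x y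
  lorentzian : ∃ b : Module.Basis (Fin (Fintype.card S)) ℝ (Vec S), ∀ i j,
    Bform k (b i) (b j) =
      if i = j then (if (i : ℕ) + 1 = Fintype.card S then -1 else 1) else 0

namespace LorentzianCoxeterSystem

variable {S W : Type} [Fintype S] [DecidableEq S] [Group W]
variable (G : LorentzianCoxeterSystem S W)

/-- The root system `Φ = W(Δ)`. -/
def rootSet : Set (Vec S) := {v | ∃ (w : W) (s : S), v = G.ρ w (simpleRoot s)}

/-- The positive roots `Φ⁺ = Φ ∩ cone(Δ)`. -/
def posRootSet : Set (Vec S) := {v | v ∈ G.rootSet ∧ ∀ s, 0 ≤ v s}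

/-- The set of projective roots `ℙΦ`. -/
def projRootSet : Set (ℙ ℝ (Vec S)) :=
  {p | ∃ (v : Vec S) (hv : v ≠ 0), v ∈ G.rootSet ∧ p = Projectivization.mk ℝ v hv}

/-- The set of limit roots `E_Φ`: accumulation points of the projective roots. -/
def limitRoots : Set (ℙ ℝ (Vec S)) := {p | IsAccumPt p G.projRootSet}

/-- The projective action of `w ∈ W` on `ℙ V`. -/
def pact (w : W) (p : ℙ ℝ (Vec S)) : ℙ ℝ (Vec S) :=
  Projectivization.map ((G.ρ w : Vec S ≃ₗ[ℝ] Vec S) : Vec S →ₗ[ℝ] Vec S) (G.ρ w).injective p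

/-- The set of limit directions `E_V`. -/
def limitDirections : Set (ℙ ℝ (Vec S)) :=
  {p | ∃ (p₀ : ℙ ℝ (Vec S)) (w : ℕ → W),
    Function.Injective (fun i => G.pact (w i) p₀) ∧
    Tendsto (fun i => G.pact (w i) p₀) atTop (nhds p)}

/-- The set `𝓛_hyp`: union over pairs of positive roots `α, β` with `𝓑(α,β) < -1` of the
projectivization of the codimension-2 subspace orthogonal to both. -/
def Lhyp : Set (ℙ ℝ (Vec S)) :=
  {p | ∃ a ∈ G.posRootSet, ∃ b ∈ G.posRootSet, Bform G.k a b < -1 ∧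
    ∃ (z : Vec S) (hz : z ≠ 0), Bform G.k z a = 0 ∧ Bform G.k z b = 0 ∧
      p = Projectivization.mk ℝ z hz}

/-- The complexification of `ρ(w)`, an endomorphism of `ℂ ⊗[ℝ] V`. -/
def endC (w : W) : Module.End ℂ (ℂ ⊗[ℝ] Vec S) :=
  LinearMap.baseChange ℂ ((G.ρ w : Vec S ≃ₗ[ℝ] Vec S) : Vec S →ₗ[ℝ] Vec S)

/-- All complex eigenvalues of the complexification of `ρ(w)` have absolute value 1. -/
def AllEigenvaluesUnimodular (w : W) : Prop :=
  ∀ μ : ℂ, Module.End.HasEigenvalue (G.endC w) μ → ‖μ‖ = 1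

/-- The complexification of `ρ(w)` is diagonalizable. -/
def DiagonalizableC (w : W) : Prop :=
  (⨆ μ : ℂ, Module.End.eigenspace (G.endC w) μ) = ⊤

/-- The unimodular subspace `U_w ⊆ V`: vectors whose image in `ℂ ⊗[ℝ] V` lies in the sum of
the eigenspaces of the complexification of `ρ(w)` for eigenvalues of absolute value 1. -/
def USet (w : W) : Set (Vec S) :=
  {v | ((1 : ℂ) ⊗ₜ[ℝ] v : ℂ ⊗[ℝ] Vec S) ∈
    ⨆ (μ : ℂ) (_ : ‖μ‖ = 1), Module.End.eigenspace (G.endC w) μ}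

/-- The projective unimodular subspace `ℙ U_w`. -/
def projU (w : W) : Set (ℙ ℝ (Vec S)) :=
  {p | ∃ (v : Vec S) (hv : v ≠ 0), v ∈ G.USet w ∧ p = Projectivization.mk ℝ v hv}

/-- The product `w_n = s₁ s₂ ⋯ s_n` of the first `n` letters of the word `ω`. -/
def prefixProd (ω : ℕ → S) (n : ℕ) : W :=
  G.cs.wordProd (List.ofFn (fun i : Fin n => ω i))

/-- `ω` is an infinite reduced word: each prefix is reduced. -/
def IsInfiniteReducedWord (ω : ℕ → S) : Prop :=
  ∀ n, G.cs.length (G.prefixProd ω n) = n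

/-- The inversion set `inv(𝐰) = {w_{k-1}(α_{s_k}) : k ≥ 1}` of an infinite word. -/
def invSet (ω : ℕ → S) : Set (Vec S) :=
  {v | ∃ n : ℕ, v = G.ρ (G.prefixProd ω n) (simpleRoot (ω n))}

/-- The projective inversion set `ℙ(inv(𝐰))`. -/
def projInvSet (ω : ℕ → S) : Set (ℙ ℝ (Vec S)) :=
  {p | ∃ (v : Vec S) (hv : v ≠ 0), v ∈ G.invSet ω ∧ p = Projectivization.mk ℝ v hv}

/-- A subset `A` of the positive roots is closed if any positive root which is a nonnegative
combination of two elements of `A` is in `A`. -/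
def IsClosedRootSubset (A : Set (Vec S)) : Prop :=
  ∀ a ∈ A, ∀ b ∈ A, ∀ x y : ℝ, 0 ≤ x → 0 ≤ y →
    x • a + y • b ∈ G.posRootSet → x • a + y • b ∈ A

end LorentzianCoxeterSystem

open LorentzianCoxeterSystem Filter

variable {S W : Type} [Fintype S] [DecidableEq S] [Group W]

/-! For unit vectors `a`, `b` with `𝓑(a,b) = -c < -1` the plane they span is hyperbolic, and the
product `r_a r_b` of the two reflections acts on it with the eigenvalue `q²`, where
`q = c - √(c² - 1) ∈ (0,1)`, on the eigenvector `y = q a + b` (because `q² + 1 = 2cq`), while it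
fixes every `z` orthogonal to `a` and `b`. Since `a` and `b` are roots, `r_a r_b` is the image of
an element `g ∈ W`, and the lines through `g^m (z + y) = z + q^{2m} y` are pairwise distinct and
converge to the line through `z`. -/

section Bform

variable {S : Type} [Fintype S] (k : S → S → ℝ)

lemma Bform_add_left (x y v : Vec S) : Bform k (x + y) v = Bform k x v + Bform k y v := by
  simp [Bform, add_mul, Finset.sum_add_distrib]

lemma Bform_smul_left (r : ℝ) (x v : Vec S) : Bform k (r • x) v = r * Bform k x v := by
  simp only [Bform, Pi.smul_apply, smul_eq_mul, Finset.mul_sum, mul_assoc]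

lemma Bform_zero_left (v : Vec S) : Bform k 0 v = 0 := by
  simp [Bform]

lemma Bform_comm (hk : ∀ s t, k s t = k t s) (x y : Vec S) : Bform k x y = Bform k y x := by
  rw [Bform, Finset.sum_comm]
  exact Finset.sum_congr rfl fun t _ => Finset.sum_congr rfl fun s _ => by rw [hk s t]; ring

/-- The `𝓑`-reflection in `a`, in the form valid when `𝓑(a,a) = 1`. -/
def reflect (a x : Vec S) : Vec S := x - (2 * Bform k x a) • a

variable {k}

lemma reflect_of_Bform_eq_zero {a x : Vec S} (h : Bform k x a = 0) : reflect k a x = x := by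
  simp [reflect, h]

lemma reflect_reflect_smul_add {a b : Vec S} {c q : ℝ} (haa : Bform k a a = 1)
    (hbb : Bform k b b = 1) (hab : Bform k a b = -c) (hba : Bform k b a = -c)
    (hq : q ^ 2 + 1 = 2 * c * q) :
    reflect k a (reflect k b (q • a + b)) = q ^ 2 • (q • a + b) := by
  have hb : reflect k b (q • a + b) = q • (a + q • b) := by
    rw [reflect, Bform_add_left, Bform_smul_left, hab, hbb,
      show 2 * (q * -c + 1) = 1 - q ^ 2 by linear_combination hq]
    module
  rw [hb, reflect, Bform_smul_left, Bform_add_left, Bform_smul_left, haa, hba,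
    show 2 * (q * (1 + q * -c)) = q * (1 - q ^ 2) by linear_combination q * hq]
  module

lemma linearIndependent_pair_of_Bform {a z y : Vec S} (hz : z ≠ 0) (hza : Bform k z a = 0)
    (hya : Bform k y a ≠ 0) : LinearIndependent ℝ ![z, y] := by
  refine LinearIndependent.pair_iff.mpr fun s t hst => ?_
  have ht : t = 0 := by
    have := congrArg (Bform k · a) hst
    simp only [Bform_add_left, Bform_smul_left, hza, Bform_zero_left] at this
    simpa [hya] using this
  subst ht
  simpa [hz] using hst

end Bform

lemma exists_sq_add_one_eq_two_mul_mul {c : ℝ} (hc : 1 < c) :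
    ∃ q : ℝ, 0 < q ∧ q < 1 ∧ q ^ 2 + 1 = 2 * c * q := by
  have hsq : √(c ^ 2 - 1) ^ 2 = c ^ 2 - 1 := Real.sq_sqrt (by nlinarith)
  have hpos : 0 ≤ √(c ^ 2 - 1) := Real.sqrt_nonneg _
  refine ⟨c - √(c ^ 2 - 1), by nlinarith, by nlinarith, by linear_combination hsq⟩

section Projective

variable {S : Type}

lemma tendsto_mk {ι : Type*} {l : Filter ι} {v : ι → Vec S} {x : Vec S} (hv : ∀ i, v i ≠ 0)
    (hx : x ≠ 0) (h : Tendsto v l (𝓝 x)) :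
    Tendsto (fun i => Projectivization.mk ℝ (v i) (hv i)) l (𝓝 (Projectivization.mk ℝ x hx)) :=
  ((continuous_quotient_mk').tendsto _).comp (tendsto_subtype_rng.mpr h)

lemma add_smul_ne_zero_of_linearIndependent {z y : Vec S} (hzy : LinearIndependent ℝ ![z, y])
    (r : ℝ) : z + r • y ≠ 0 := by
  intro h
  exact one_ne_zero (LinearIndependent.pair_iff.mp hzy 1 r (by rwa [one_smul])).1

lemma injective_mk_add_smul {ι : Type*} {z y : Vec S} (hzy : LinearIndependent ℝ ![z, y])
    {r : ι → ℝ} (hr : Function.Injective r) :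
    Function.Injective fun i =>
      Projectivization.mk ℝ (z + r i • y) (add_smul_ne_zero_of_linearIndependent hzy (r i)) := by
  intro i j h
  obtain ⟨t, ht⟩ := (Projectivization.mk_eq_mk_iff' ℝ _ _ _ _).mp h
  have hcoef := LinearIndependent.pair_iff.mp hzy (t - 1) (t * r j - r i) (by
    rw [← sub_eq_zero.mpr ht]; module)
  have ht1 : t = 1 := sub_eq_zero.mp hcoef.1
  subst ht1
  exact hr (by linarith [hcoef.2])

end Projective

namespace LorentzianCoxeterSystem

variable {S W : Type} [Fintype S] [DecidableEq S] [Group W] (G : LorentzianCoxeterSystem S W)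

lemma Bform_simpleRoot_self (s : S) : Bform G.k (simpleRoot s) (simpleRoot s) = 1 := by
  have hk := G.k_fin s s (by simp)
  simp [Bform, simpleRoot, Pi.single_apply, hk]

lemma Bform_self_of_mem_rootSet {a : Vec S} (ha : a ∈ G.rootSet) : Bform G.k a a = 1 := by
  obtain ⟨w, s, rfl⟩ := ha
  rw [G.ρ_preserves, G.Bform_simpleRoot_self]

lemma rho_conj_simple_apply (w : W) (s : S) (x : Vec S) :
    G.ρ (w * G.cs.simple s * w⁻¹) x = reflect G.k (G.ρ w (simpleRoot s)) x := by
  have hx : G.ρ w (G.ρ w⁻¹ x) = x := by simp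
  rw [map_mul, map_mul, LinearEquiv.mul_apply, LinearEquiv.mul_apply, G.ρ_simple,
    G.Bform_simpleRoot_self, ← G.ρ_preserves w, hx, map_sub, map_smul, hx, div_one, reflect]

lemma exists_rho_eq_reflect {a : Vec S} (ha : a ∈ G.rootSet) :
    ∃ r : W, ∀ x, G.ρ r x = reflect G.k a x := by
  obtain ⟨w, s, rfl⟩ := ha
  exact ⟨w * G.cs.simple s * w⁻¹, G.rho_conj_simple_apply w s⟩

lemma rho_pow_apply_of_eq_smul {g : W} {y : Vec S} {μ : ℝ} (h : G.ρ g y = μ • y) (m : ℕ) :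
    G.ρ (g ^ m) y = μ ^ m • y := by
  induction m with
  | zero => simp
  | succ m ih =>
    rw [pow_succ, map_mul, LinearEquiv.mul_apply, h, map_smul, ih, smul_smul, pow_succ']

lemma mk_mem_limitDirections_of_fixed_of_eigenvalue_lt_one {g : W} {z y : Vec S} {μ : ℝ}
    (hz : z ≠ 0) (hgz : G.ρ g z = z) (hgy : G.ρ g y = μ • y) (hμ0 : 0 < μ) (hμ1 : μ < 1)
    (hzy : LinearIndependent ℝ ![z, y]) :
    Projectivization.mk ℝ z hz ∈ G.limitDirections := by
  have hne := add_smul_ne_zero_of_linearIndependent hzy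
  have horbit :
      (fun m : ℕ => G.pact (g ^ m) (Projectivization.mk ℝ (z + y) (by simpa using hne 1))) =
        fun m => Projectivization.mk ℝ (z + μ ^ m • y) (hne (μ ^ m)) := by
    funext m
    have hfix := G.rho_pow_apply_of_eq_smul (μ := 1) (by rwa [one_smul]) m
    rw [pact, Projectivization.map_mk]
    congr 1
    rw [LinearEquiv.coe_coe, map_add, hfix, G.rho_pow_apply_of_eq_smul hgy m, one_pow, one_smul]
  refine ⟨_, fun m => g ^ m, horbit ▸ injective_mk_add_smul hzy ?_, horbit ▸ tendsto_mk _ hz ?_⟩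
  · exact (pow_right_strictAnti₀ hμ0 hμ1).injective
  · simpa using tendsto_const_nhds.add
      ((tendsto_pow_atTop_nhds_zero_of_lt_one hμ0.le hμ1).smul_const y)

end LorentzianCoxeterSystem

/-- `𝓛_hyp ⊆ E_V`: for positive roots `a, b` with `𝓑(a,b) < -1`, every nonzero `z`
orthogonal to both gives a limit direction. -/
theorem Lhyp_subset_limitDirections (G : LorentzianCoxeterSystem S W)
    (a : Vec S) (ha : a ∈ G.posRootSet) (b : Vec S) (hb : b ∈ G.posRootSet)
    (hab : Bform G.k a b < -1)
    (z : Vec S) (hz : z ≠ 0) (hza : Bform G.k z a = 0) (hzb : Bform G.k z b = 0) :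
    Projectivization.mk ℝ z hz ∈ G.limitDirections := by
  obtain ⟨q, hq0, hq1, hq⟩ := exists_sq_add_one_eq_two_mul_mul (c := -Bform G.k a b) (by linarith)
  obtain ⟨ra, hra⟩ := G.exists_rho_eq_reflect ha.1
  obtain ⟨rb, hrb⟩ := G.exists_rho_eq_reflect hb.1
  have haa := G.Bform_self_of_mem_rootSet ha.1
  have hba : Bform G.k b a = -(-Bform G.k a b) := by rw [neg_neg, Bform_comm G.k G.k_symm]
  have hya : Bform G.k (q • a + b) a ≠ 0 := by
    rw [Bform_add_left, Bform_smul_left, haa, hba]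
    linarith
  refine G.mk_mem_limitDirections_of_fixed_of_eigenvalue_lt_one (g := ra * rb) hz ?_ ?_
    (pow_pos hq0 2) (pow_lt_one₀ hq0.le hq1 two_ne_zero)
    (linearIndependent_pair_of_Bform hz hza hya)
  · rw [map_mul, LinearEquiv.mul_apply, hrb, hra, reflect_of_Bform_eq_zero hzb,
      reflect_of_Bform_eq_zero hza]
  · rw [map_mul, LinearEquiv.mul_apply, hrb, hra]
    exact reflect_reflect_smul_add haa (G.Bform_self_of_mem_rootSet hb.1) (neg_neg _).symm hba hq
end
end

section
/- Let G be a group acting on a topological space X and let H be a subgroup of G of finite index. Then a point x ∈ X is a limit point of H if and only if it is a limit point of G; that is, there exists x₀ ∈ X such that x is an accumulation point of the orbit H·x₀ if and only if there exists x₀′ ∈ X such that x is an accumulation point of the orbit G·x₀′. -/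
open Filter Topology

section IsAccumPt

variable {X : Type*} [TopologicalSpace X] {p : X}

theorem isAccumPt_iff_frequently_nhdsNE {Y : Set X} :
    IsAccumPt p Y ↔ ∃ᶠ y in 𝓝[≠] p, y ∈ Y := by
  rw [← accPt_iff_frequently_nhdsNE, accPt_iff_nhds]
  simp only [IsAccumPt, Set.mem_inter_iff, and_assoc, and_comm (a := _ ∈ Y)]

theorem IsAccumPt.mono {Y Z : Set X} (h : IsAccumPt p Y) (hYZ : Y ⊆ Z) : IsAccumPt p Z :=
  isAccumPt_iff_frequently_nhdsNE.2 <| (isAccumPt_iff_frequently_nhdsNE.1 h).mono fun _ hy ↦ hYZ hy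

theorem isAccumPt_iUnion {ι : Type*} [Finite ι] {Y : ι → Set X} :
    IsAccumPt p (⋃ i, Y i) ↔ ∃ i, IsAccumPt p (Y i) := by
  simp only [isAccumPt_iff_frequently_nhdsNE, Set.mem_iUnion, frequently_exists]

end IsAccumPt

namespace MulAction

theorem orbit_eq_iUnion_orbit_subgroup {G X : Type*} [Group G] [MulAction G X] (H : Subgroup G)
    (x : X) : orbit G x = ⋃ q : G ⧸ H, orbit H (q.out⁻¹ • x) := by
  refine subset_antisymm ?_ (Set.iUnion_subset fun q ↦ ?_)
  · rintro _ ⟨g, rfl⟩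
    obtain ⟨h, hout⟩ := QuotientGroup.mk_out_eq_mul H g⁻¹
    refine Set.mem_iUnion.2 ⟨((g⁻¹ : G) : G ⧸ H), h, ?_⟩
    dsimp only
    rw [Subgroup.smul_def, hout, smul_smul, mul_inv_rev, inv_inv, mul_inv_cancel_left]
  · rw [← orbit_smul q.out⁻¹ x]
    exact orbit_subgroup_subset H _

end MulAction

/-- For a group `G` acting on a topological space `X` and a finite-index subgroup `H ≤ G`,
a point is a limit point of `H` iff it is a limit point of `G`. -/
theorem limitPoint_subgroup_iff_limitPoint_of_finiteIndex {G X : Type*} [Group G]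
    [MulAction G X] [TopologicalSpace X] (H : Subgroup G) (hH : H.index ≠ 0) (x : X) :
    (∃ x₀ : X, IsAccumPt x (MulAction.orbit H x₀)) ↔
    (∃ x₀' : X, IsAccumPt x (MulAction.orbit G x₀')) := by
  have : Finite (G ⧸ H) := Subgroup.index_ne_zero_iff_finite.1 hH
  constructor
  · rintro ⟨x₀, hx₀⟩
    exact ⟨x₀, hx₀.mono (MulAction.orbit_subgroup_subset H x₀)⟩
  · rintro ⟨x₀, hx₀⟩
    rw [MulAction.orbit_eq_iUnion_orbit_subgroup H, isAccumPt_iUnion] at hx₀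
    obtain ⟨q, hq⟩ := hx₀
    exact ⟨_, hq⟩
end
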